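/- Lemma (dual error bound for Perturbed GDA). Let f be ℓ-smooth and satisfy the standing assumptions, let r_y > 0 and α > 0, and let {(x_t, y_t)} be generated by Perturbed GDA. Then for every t ≥ 1: ‖ỹ*(x_t) − y_t‖ ≤ ((1 + α(ℓ + r_y))/(α·r_y))·‖y_t − y_{t−1}‖. -/

import Mathlib

open Set

noncomputable section

/-- Euclidean space `ℝ^m`. -/
abbrev Euc (m : ℕ) : Type := EuclideanSpace ℝ (Fin m)

/-- `P` is the metric projection onto the set `S`, characterized by
`⟨u − P u, s − P u⟩ ≤ 0` for all `s ∈ S`. -/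
def IsProjection {m : ℕ} (S : Set (Euc m)) (P : Euc m → Euc m) : Prop :=
  ∀ u, P u ∈ S ∧ ∀ s ∈ S, (inner ℝ (u - P u) (s - P u) : ℝ) ≤ 0

/-- `f` is `l`-smooth, witnessed by the partial gradient maps `gx`, `gy`. -/
def LSmooth {n d : ℕ} (f : Euc n → Euc d → ℝ) (gx : Euc n → Euc d → Euc n)
    (gy : Euc n → Euc d → Euc d) (l : ℝ) : Prop :=
  (∀ x y, HasGradientAt (fun x' => f x' y) (gx x y) x) ∧
  (∀ x y, HasGradientAt (fun y' => f x y') (gy x y) y) ∧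
  (∀ x x' y y', ‖gx x y - gx x' y'‖ ≤ l * (‖x - x'‖ + ‖y - y'‖)) ∧
  (∀ x x' y y', ‖gy x y - gy x' y'‖ ≤ l * (‖x - x'‖ + ‖y - y'‖))

/-- Standing assumptions: `X` closed convex; `Y` nonempty compact convex
containing `0` with diameter `Dy`; `f x` concave on `Y` for every `x ∈ X`. -/
def Standing {n d : ℕ} (f : Euc n → Euc d → ℝ) (X : Set (Euc n)) (Y : Set (Euc d))
    (Dy : ℝ) : Prop :=
  IsClosed X ∧ Convex ℝ X ∧ Y.Nonempty ∧ IsCompact Y ∧ Convex ℝ Y ∧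
    (0 : Euc d) ∈ Y ∧ Metric.diam Y = Dy ∧ ∀ x ∈ X, ConcaveOn ℝ Y (f x)

/-! Write `G := ∇_y f̃(x_{t+1}, ·)`. Concavity of `f(x_{t+1}, ·)` makes `-G` `r_y`-strongly
monotone, and `G` is `(ℓ + r_y)`-Lipschitz. Testing the first-order optimality condition of
`ỹ*(x_{t+1})` at `y_{t+1}`, and the projection inequality defining `y_{t+1}` at `ỹ*(x_{t+1})`, gives
`α r_y ‖ỹ* - y_{t+1}‖² ≤ α ⟪G y_{t+1} - G y_t, ỹ* - y_{t+1}⟫ + ⟪y_{t+1} - y_t, ỹ* - y_{t+1}⟫`,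
and Cauchy–Schwarz on both terms yields the bound. -/

open scoped RealInnerProductSpace

variable {E : Type*} [NormedAddCommGroup E] [InnerProductSpace ℝ E]

theorem mul_norm_sub_le_of_projected_step {G : E → E} {y y' z : E} {α μ L : ℝ} (hα : 0 ≤ α)
    (hmono : ⟪G y' - G z, y' - z⟫ ≤ -(μ * ‖y' - z‖ ^ 2))
    (hlip : ‖G y' - G y‖ ≤ L * ‖y' - y‖)
    (hopt : ⟪G z, y' - z⟫ ≤ 0)
    (hproj : ⟪y + α • G y - y', z - y'⟫ ≤ 0) :
    α * μ * ‖z - y'‖ ≤ (1 + α * L) * ‖y' - y‖ := by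
  have hstep : μ * ‖z - y'‖ ^ 2 ≤ ⟪G y', z - y'⟫ := by
    have hflip : ⟪G y', z - y'⟫ = -⟪G y', y' - z⟫ := by rw [← inner_neg_right, neg_sub]
    rw [inner_sub_left, norm_sub_rev] at hmono
    linarith
  have hproj' : α * ⟪G y, z - y'⟫ ≤ ⟪y' - y, z - y'⟫ := by
    rw [add_sub_right_comm, inner_add_left, real_inner_smul_left, ← neg_sub y' y,
      inner_neg_left] at hproj
    linarith
  have hquad : (α * μ * ‖z - y'‖) * ‖z - y'‖ ≤ ((1 + α * L) * ‖y' - y‖) * ‖z - y'‖ :=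
    calc (α * μ * ‖z - y'‖) * ‖z - y'‖ = α * (μ * ‖z - y'‖ ^ 2) := by ring
      _ ≤ α * ⟪G y', z - y'⟫ := mul_le_mul_of_nonneg_left hstep hα
      _ = α * ⟪G y' - G y, z - y'⟫ + α * ⟪G y, z - y'⟫ := by rw [inner_sub_left]; ring
      _ ≤ α * (‖G y' - G y‖ * ‖z - y'‖) + ⟪y' - y, z - y'⟫ := by
        gcongr
        exact real_inner_le_norm _ _
      _ ≤ α * (L * ‖y' - y‖ * ‖z - y'‖) + ‖y' - y‖ * ‖z - y'‖ := by
        gcongr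
        exact real_inner_le_norm _ _
      _ = ((1 + α * L) * ‖y' - y‖) * ‖z - y'‖ := by ring
  rcases (norm_nonneg (z - y')).eq_or_lt with h0 | hpos
  · have hL : 0 ≤ L * ‖y' - y‖ := (norm_nonneg _).trans hlip
    rw [← h0]
    nlinarith [norm_nonneg (y' - y)]
  · exact le_of_mul_le_mul_right hquad hpos

variable [CompleteSpace E]

theorem HasGradientAt.sub_half_mul_norm_sq {φ : E → ℝ} {g y : E} (h : HasGradientAt φ g y) (r : ℝ) :
    HasGradientAt (fun w => φ w - r / 2 * ‖w‖ ^ 2) (g - r • y) y := by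
  rw [hasGradientAt_iff_hasFDerivAt] at h ⊢
  refine (h.sub ((hasStrictFDerivAt_norm_sq y).hasFDerivAt.const_mul (r / 2))).congr_fderiv ?_
  ext v
  simp only [sub_apply, InnerProductSpace.toDual_apply_apply,
    smul_apply, innerSL_apply_apply, nsmul_eq_mul, Nat.cast_ofNat, smul_eq_mul,
    inner_sub_left, real_inner_smul_left]
  ring

theorem ConcaveOn.sub_le_inner_gradient {S : Set E} {φ : E → ℝ} (hφ : ConcaveOn ℝ S φ)
    {a b g : E} (ha : a ∈ S) (hb : b ∈ S) (hg : HasGradientAt φ g b) :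
    φ a - φ b ≤ ⟪g, a - b⟫ := by
  have hline := hφ.comp_affineMap (AffineMap.lineMap (k := ℝ) b a)
  have hd : HasDerivAt (φ ∘ AffineMap.lineMap (k := ℝ) b a) ⟪g, a - b⟫ 0 := by
    simpa using hg.hasFDerivAt.comp_hasDerivAt_of_eq (0 : ℝ) AffineMap.hasDerivAt_lineMap
      (AffineMap.lineMap_apply_zero b a).symm
  simpa [slope_def_field] using
    hline.slope_le_of_hasDerivAt (x := 0) (y := 1) (by simpa using hb) (by simpa using ha) one_pos hd

theorem ConcaveOn.inner_gradient_sub_nonpos {S : Set E} {φ : E → ℝ} (hφ : ConcaveOn ℝ S φ)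
    {a b ga gb : E} (ha : a ∈ S) (hb : b ∈ S) (hga : HasGradientAt φ ga a)
    (hgb : HasGradientAt φ gb b) : ⟪ga - gb, a - b⟫ ≤ 0 := by
  have hab := hφ.sub_le_inner_gradient ha hb hgb
  have hba := hφ.sub_le_inner_gradient hb ha hga
  rw [← neg_sub a b, inner_neg_right] at hba
  rw [inner_sub_left]
  linarith

theorem IsMaxOn.inner_gradient_nonpos {S : Set E} {φ : E → ℝ} (hS : Convex ℝ S) {z g w : E}
    (hmax : IsMaxOn φ S z) (hz : z ∈ S) (hw : w ∈ S) (hg : HasGradientAt φ g z) :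
    ⟪g, w - z⟫ ≤ 0 := by
  simpa using hmax.localize.hasFDerivWithinAt_nonpos hg.hasFDerivAt.hasFDerivWithinAt
    (sub_mem_posTangentConeAt_of_segment_subset (hS.segment_subset hz hw))

theorem ConcaveOn.mul_norm_argmax_sub_projected_step_le {S : Set E} {φ : E → ℝ} {g : E → E}
    {L r α : ℝ} {y y' z : E} (hS : Convex ℝ S) (hφ : ConcaveOn ℝ S φ)
    (hg : ∀ w ∈ S, HasGradientAt φ (g w) w) (hlip : ∀ a b, ‖g a - g b‖ ≤ L * ‖a - b‖)
    (hr : 0 ≤ r) (hα : 0 ≤ α) (hz : z ∈ S) (hmax : IsMaxOn (fun w => φ w - r / 2 * ‖w‖ ^ 2) S z)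
    (hy' : y' ∈ S) (hproj : ∀ s ∈ S, ⟪y + α • (g y - r • y) - y', s - y'⟫ ≤ 0) :
    α * r * ‖z - y'‖ ≤ (1 + α * (L + r)) * ‖y' - y‖ := by
  refine mul_norm_sub_le_of_projected_step (G := fun w => g w - r • w) hα ?_ ?_
    (hmax.inner_gradient_nonpos hS hz hy' ((hg z hz).sub_half_mul_norm_sq r)) (hproj z hz)
  · have hmono := hφ.inner_gradient_sub_nonpos hy' hz (hg y' hy') (hg z hz)
    rw [sub_sub_sub_comm, ← smul_sub, inner_sub_left, real_inner_smul_left,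
      real_inner_self_eq_norm_sq]
    linarith
  · calc ‖(g y' - r • y') - (g y - r • y)‖ = ‖(g y' - g y) - r • (y' - y)‖ := by
          rw [sub_sub_sub_comm, smul_sub]
      _ ≤ ‖g y' - g y‖ + ‖r • (y' - y)‖ := norm_sub_le _ _
      _ ≤ L * ‖y' - y‖ + r * ‖y' - y‖ := by
          rw [norm_smul, Real.norm_of_nonneg hr]
          gcongr
          exact hlip y' y
      _ = (L + r) * ‖y' - y‖ := by ring

theorem perturbed_gda_dual_error_bound_general
    (n d : ℕ) (f : Euc n → Euc d → ℝ) (gx : Euc n → Euc d → Euc n)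
    (gy : Euc n → Euc d → Euc d) (X : Set (Euc n)) (Y : Set (Euc d))
    (l Dy ry α c : ℝ)
    (projX : Euc n → Euc n) (projY : Euc d → Euc d)
    (xs : ℕ → Euc n) (ys : ℕ → Euc d) (ystar : Euc n → Euc d)
    (hry : 0 < ry) (hα : 0 < α)
    (hsmooth : LSmooth f gx gy l) (hstand : Standing f X Y Dy)
    (hprojX : IsProjection X projX) (hprojY : IsProjection Y projY)
    -- Perturbed GDA iterations
    (hxrec : ∀ t, xs (t + 1) = projX (xs t - c • gx (xs t) (ys t)))
    (hyrec : ∀ t, ys (t + 1) = projY (ys t + α • (gy (xs (t + 1)) (ys t) - ry • ys t)))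
    -- ỹ*(x): maximizer of f̃(x,·) over Y
    (hystar : ∀ x, ystar x ∈ Y ∧
      ∀ y ∈ Y, f x y - ry / 2 * ‖y‖ ^ 2 ≤ f x (ystar x) - ry / 2 * ‖ystar x‖ ^ 2) :
    ∀ t : ℕ, ‖ystar (xs (t + 1)) - ys (t + 1)‖ ≤
      (1 + α * (l + ry)) / (α * ry) * ‖ys (t + 1) - ys t‖ := by
  obtain ⟨-, hgy, -, hlipy⟩ := hsmooth
  obtain ⟨-, -, -, -, hYconv, -, -, hconc⟩ := hstand
  intro t
  have hxX : xs (t + 1) ∈ X := by rw [hxrec t]; exact (hprojX _).1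
  set x := xs (t + 1)
  have hstep := (hconc x hxX).mul_norm_argmax_sub_projected_step_le hYconv (fun w _ => hgy x w)
    (fun a b => by simpa using hlipy x x a b) hry.le hα.le (hystar x).1 (isMaxOn_iff.2 (hystar x).2)
    (hyrec t ▸ (hprojY _).1) (by rw [hyrec t]; exact (hprojY _).2)
  rw [div_mul_eq_mul_div, le_div_iff₀ (by positivity)]
  linarith

/-- Dual error bound for Perturbed GDA: for every `t ≥ 1`,
`‖ỹ*(x_t) − y_t‖ ≤ ((1 + α(ℓ + r_y))/(α r_y))·‖y_t − y_{t−1}‖`. -/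
theorem perturbed_gda_dual_error_bound
    (n d : ℕ) (f : Euc n → Euc d → ℝ) (gx : Euc n → Euc d → Euc n)
    (gy : Euc n → Euc d → Euc d) (X : Set (Euc n)) (Y : Set (Euc d))
    (l Dy ry α c : ℝ)
    (projX : Euc n → Euc n) (projY : Euc d → Euc d)
    (xs : ℕ → Euc n) (ys : ℕ → Euc d) (ystar : Euc n → Euc d)
    (hl : 0 < l) (hDy : 0 < Dy) (hry : 0 < ry) (hα : 0 < α) (hc : 0 < c)
    (hsmooth : LSmooth f gx gy l) (hstand : Standing f X Y Dy)
    (hprojX : IsProjection X projX) (hprojY : IsProjection Y projY)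
    -- Perturbed GDA iterations
    (hx0 : xs 0 ∈ X) (hy0 : ys 0 ∈ Y)
    (hxrec : ∀ t, xs (t + 1) = projX (xs t - c • gx (xs t) (ys t)))
    (hyrec : ∀ t, ys (t + 1) = projY (ys t + α • (gy (xs (t + 1)) (ys t) - ry • ys t)))
    -- ỹ*(x): maximizer of f̃(x,·) over Y
    (hystar : ∀ x, ystar x ∈ Y ∧
      ∀ y ∈ Y, f x y - ry / 2 * ‖y‖ ^ 2 ≤ f x (ystar x) - ry / 2 * ‖ystar x‖ ^ 2) :
    ∀ t : ℕ, ‖ystar (xs (t + 1)) - ys (t + 1)‖ ≤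
      (1 + α * (l + ry)) / (α * ry) * ‖ys (t + 1) - ys t‖ :=
  perturbed_gda_dual_error_bound_general n d f gx gy X Y l Dy ry α c projX projY xs ys ystar hry hα
    hsmooth hstand hprojX hprojY hxrec hyrec hystar
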